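/- Let f̃ be a continuous function on [0,∞) and suppose there exists a normed space Y of locally integrable functions on (0,∞) such that: (i) J_Y(f̃) := sup_{0≠g∈Y}|∫f̃g|/‖g‖_Y < ∞, and (ii) for every segment [a,b]⊂(0,∞) and every ε>0, θ>0 there exists g∈Y with ‖g‖_Y<ε and |g|=θ on (a,b). If for every b>0 the set {x>b : f̃(x)≠0} has positive measure, then one obtains a contradiction; hence f̃ has compact support in [0,∞). -/
import Mathlib


open MeasureTheory Set

/-- Support argument of Theorem 2: if `f̃` is continuous on `[0,∞)`, pairs finitely with every
`g ∈ Y` (`∫|f̃ g| < ∞`), and `Y` contains, for every segment `[a,b] ⊂ (0,∞)` and every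
`ε, θ > 0`, a function of norm `< ε`, supported in `[a,b]` and with `|g| = θ` on `(a,b)`, and
`Y` is closed under sums `Σ g_k` with `N(g_k) ≤ 2^{-k}`, then `{x > b : f̃(x) ≠ 0}` must be
null for some `b > 0`; i.e. `f̃` vanishes a.e. beyond some point. -/
theorem support_is_bounded
    (ftilde : ℝ → ℝ) (hcont : ContinuousOn ftilde (Set.Ici 0))
    (memY : (ℝ → ℝ) → Prop) (N : (ℝ → ℝ) → ℝ)
    (hN_nonneg : ∀ g, memY g → 0 ≤ N g)
    (hD : ∀ g, memY g → (∫⁻ x in Set.Ioi 0, ENNReal.ofReal |ftilde x * g x|) < ⊤)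
    (hsmall : ∀ a b ε θ : ℝ, 0 < a → a < b → 0 < ε → 0 < θ →
      ∃ g, memY g ∧ N g < ε ∧ (∀ x ∈ Set.Ioo a b, |g x| = θ) ∧
        ∀ x ∉ Set.Icc a b, g x = 0)
    (hsum : ∀ gs : ℕ → ℝ → ℝ, (∀ k, memY (gs k)) → (∀ k, N (gs k) ≤ (2:ℝ)⁻¹ ^ k) →
      memY fun x => ∑' k, gs k x) :
    ∃ b > (0:ℝ), volume {x : ℝ | b < x ∧ ftilde x ≠ 0} = 0 := by
  by_contra hcon
  push_neg at hcon
  -- From the negation: beyond every `b`, there are segments where |f̃| is bounded below.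
  have key : ∀ b : ℝ, ∃ p : ℝ × ℝ × ℝ, max b 1 < p.1 ∧ p.1 < p.2.1 ∧ 0 < p.2.2 ∧
      ∀ x ∈ Icc p.1 p.2.1, p.2.2 ≤ |ftilde x| := by
    intro b
    set c := max b 1 with hc
    have hc0 : 0 < c := lt_of_lt_of_le one_pos (le_max_right _ _)
    have hne : volume {x : ℝ | c < x ∧ ftilde x ≠ 0} ≠ 0 := hcon c hc0
    have : {x : ℝ | c < x ∧ ftilde x ≠ 0}.Nonempty := by
      by_contra h
      rw [not_nonempty_iff_eq_empty] at h
      exact hne (by rw [h]; simp)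
    obtain ⟨x, hxc, hxne⟩ := this
    have hx0 : 0 < x := lt_trans hc0 hxc
    -- continuity at x
    have hca : ContinuousAt ftilde x := hcont.continuousAt (Ici_mem_nhds hx0)
    have habs : ContinuousAt (fun y => |ftilde y|) x := hca.abs
    have hm0 : 0 < |ftilde x| := abs_pos.mpr hxne
    have hev : ∀ᶠ y in nhds x, |ftilde x| / 2 < |ftilde y| :=
      habs.eventually_const_lt (half_lt_self hm0)
    obtain ⟨δ, hδ0, hδ⟩ := Metric.eventually_nhds_iff_ball.mp hev
    set δ' := min (δ / 2) ((x - c) / 2) with hδ'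
    have hδ'0 : 0 < δ' := lt_min (half_pos hδ0) (half_pos (sub_pos.mpr hxc))
    refine ⟨(x - δ', x + δ', |ftilde x| / 2), ?_, by simp [hδ'0]; linarith, half_pos hm0, ?_⟩
    · show c < x - δ'
      have : δ' ≤ (x - c) / 2 := min_le_right _ _
      linarith [sub_pos.mpr hxc]
    · intro y hy
      have : y ∈ Metric.ball x δ := by
        rw [Metric.mem_ball, Real.dist_eq, abs_lt]
        have h1 : δ' ≤ δ / 2 := min_le_left _ _
        obtain ⟨hy1, hy2⟩ := hy
        constructor <;> linarith [half_lt_self hδ0]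
      exact (hδ y this).le
  classical
  -- recursive construction of disjoint segments
  let seq : ℕ → ℝ × ℝ × ℝ := fun k =>
    Nat.rec ((key 0).choose) (fun _ p => (key p.2.1).choose) k
  set A : ℕ → ℝ := fun k => (seq k).1 with hA
  set B : ℕ → ℝ := fun k => (seq k).2.1 with hB
  set M : ℕ → ℝ := fun k => (seq k).2.2 with hM
  have hspec : ∀ k, (1 < A k) ∧ (A k < B k) ∧ (0 < M k) ∧
      (∀ x ∈ Icc (A k) (B k), M k ≤ |ftilde x|) ∧ (B k < A (k + 1)) := by
    intro k
    have h0 : ∀ j, seq (j+1) = (key (seq j).2.1).choose := fun j => rfl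
    have hsk : max (if k = 0 then (0:ℝ) else B (k-1)) 1 < A k ∧ A k < B k ∧ 0 < M k ∧
        ∀ x ∈ Icc (A k) (B k), M k ≤ |ftilde x| := by
      cases k with
      | zero => exact (key 0).choose_spec
      | succ j => exact (key (seq j).2.1).choose_spec
    obtain ⟨h1, h2, h3, h4⟩ := hsk
    have hnext : max (B k) 1 < A (k+1) := by
      have := ((key (seq k).2.1).choose_spec).1
      exact this
    refine ⟨lt_of_le_of_lt (le_max_right _ _) h1, h2, h3, h4,
      lt_of_le_of_lt (le_max_left _ _) hnext⟩
  have hA1 : ∀ k, 1 < A k := fun k => (hspec k).1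
  have hAB : ∀ k, A k < B k := fun k => (hspec k).2.1
  have hM0 : ∀ k, 0 < M k := fun k => (hspec k).2.2.1
  have hlow : ∀ k, ∀ x ∈ Icc (A k) (B k), M k ≤ |ftilde x| := fun k => (hspec k).2.2.2.1
  have hBA : ∀ k, B k < A (k+1) := fun k => (hspec k).2.2.2.2
  -- segments are increasing: for j < k, B j < A k
  have hsep : ∀ j k, j < k → B j < A k := by
    intro j k hjk
    induction k with
    | zero => omega
    | succ n ih =>
      rcases Nat.lt_succ_iff_lt_or_eq.mp hjk with h | h
      · exact lt_trans (ih h) (lt_trans (hAB n) (hBA n))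
      · subst h; exact hBA j
  -- choose test functions
  have hθ : ∀ k : ℕ, 0 < (M k * (B k - A k))⁻¹ := fun k =>
    inv_pos.mpr (mul_pos (hM0 k) (sub_pos.mpr (hAB k)))
  have hgs : ∀ k : ℕ, ∃ g, memY g ∧ N g < (2:ℝ)⁻¹ ^ k ∧
      (∀ x ∈ Ioo (A k) (B k), |g x| = (M k * (B k - A k))⁻¹) ∧
      ∀ x ∉ Icc (A k) (B k), g x = 0 := by
    intro k
    exact hsmall (A k) (B k) ((2:ℝ)⁻¹ ^ k) _ (lt_trans one_pos (hA1 k)) (hAB k)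
      (pow_pos (by norm_num) k) (hθ k)
  set gs : ℕ → ℝ → ℝ := fun k => (hgs k).choose with hgsdef
  have hgsY : ∀ k, memY (gs k) := fun k => (hgs k).choose_spec.1
  have hgsN : ∀ k, N (gs k) ≤ (2:ℝ)⁻¹ ^ k := fun k => ((hgs k).choose_spec.2.1).le
  have hgsθ : ∀ k, ∀ x ∈ Ioo (A k) (B k), |gs k x| = (M k * (B k - A k))⁻¹ :=
    fun k => (hgs k).choose_spec.2.2.1
  have hgs0 : ∀ k, ∀ x ∉ Icc (A k) (B k), gs k x = 0 := fun k => (hgs k).choose_spec.2.2.2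
  set g : ℝ → ℝ := fun x => ∑' k, gs k x with hg
  have hgY : memY g := hsum gs hgsY hgsN
  have hfin := hD g hgY
  -- On Ioo (A k) (B k), g = gs k
  have hgeq : ∀ k, ∀ x ∈ Ioo (A k) (B k), g x = gs k x := by
    intro k x hx
    refine tsum_eq_single k ?_
    intro j hj
    apply hgs0 j
    intro hxj
    rcases lt_or_gt_of_ne hj with h | h
    · exact absurd hxj.2 (not_le.mpr (lt_trans (hsep j k h) hx.1))
    · exact absurd hxj.1 (not_le.mpr (lt_trans hx.2 (hsep k j h)))
  -- the integral is infinite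
  have hsub : (⋃ k, Ioo (A k) (B k)) ⊆ Ioi (0:ℝ) := by
    intro x hx
    obtain ⟨k, hk⟩ := mem_iUnion.mp hx
    exact lt_trans (lt_trans one_pos (hA1 k)) hk.1
  have hdisj : Pairwise (Function.onFun Disjoint fun k => Ioo (A k) (B k)) := by
    intro j k hjk
    rcases lt_or_gt_of_ne hjk with h | h
    · exact Set.disjoint_left.mpr fun x hxj hxk =>
        absurd hxk.1 (not_lt.mpr (le_trans hxj.2.le (hsep j k h).le))
    · exact Set.disjoint_left.mpr fun x hxj hxk =>
        absurd hxj.1 (not_lt.mpr (le_trans hxk.2.le (hsep k j h).le))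
  have hbig : (∫⁻ x in Set.Ioi 0, ENNReal.ofReal |ftilde x * g x|) = ⊤ := by
    have h1 : (∫⁻ x in ⋃ k, Ioo (A k) (B k), ENNReal.ofReal |ftilde x * g x|)
        ≤ ∫⁻ x in Set.Ioi 0, ENNReal.ofReal |ftilde x * g x| :=
      lintegral_mono_set hsub
    have h2 : (∫⁻ x in ⋃ k, Ioo (A k) (B k), ENNReal.ofReal |ftilde x * g x|)
        = ∑' k, ∫⁻ x in Ioo (A k) (B k), ENNReal.ofReal |ftilde x * g x| :=
      lintegral_iUnion (fun k => measurableSet_Ioo) hdisj _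
    have h3 : ∀ k, (1:ENNReal) ≤ ∫⁻ x in Ioo (A k) (B k), ENNReal.ofReal |ftilde x * g x| := by
      intro k
      have hba : 0 < (B k - A k)⁻¹ := inv_pos.mpr (sub_pos.mpr (hAB k))
      have hc : ∀ x ∈ Ioo (A k) (B k),
          ENNReal.ofReal ((B k - A k)⁻¹) ≤ ENNReal.ofReal |ftilde x * g x| := by
        intro x hx
        apply ENNReal.ofReal_le_ofReal
        rw [abs_mul, hgeq k x hx, hgsθ k x hx]
        have hfx : M k ≤ |ftilde x| := hlow k x (Ioo_subset_Icc_self hx)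
        rw [mul_inv]
        calc (B k - A k)⁻¹ = M k * ((M k)⁻¹ * (B k - A k)⁻¹) := by
              rw [← mul_assoc, mul_inv_cancel₀ (ne_of_gt (hM0 k)), one_mul]
          _ ≤ |ftilde x| * ((M k)⁻¹ * (B k - A k)⁻¹) :=
              mul_le_mul_of_nonneg_right hfx
                (le_of_lt (mul_pos (inv_pos.mpr (hM0 k)) hba))
      calc (1:ENNReal) = ENNReal.ofReal ((B k - A k)⁻¹) * volume (Ioo (A k) (B k)) := by
            rw [Real.volume_Ioo, ← ENNReal.ofReal_mul hba.le]
            rw [inv_mul_cancel₀ (ne_of_gt (sub_pos.mpr (hAB k)))]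
            simp
        _ = ∫⁻ _ in Ioo (A k) (B k), ENNReal.ofReal ((B k - A k)⁻¹) :=
            (setLIntegral_const _ _).symm
        _ ≤ _ := setLIntegral_mono' measurableSet_Ioo hc
    have h4 : (∑' k : ℕ, (1:ENNReal)) ≤ ∑' k, ∫⁻ x in Ioo (A k) (B k),
        ENNReal.ofReal |ftilde x * g x| := ENNReal.tsum_le_tsum h3
    have h5 : (∑' _ : ℕ, (1:ENNReal)) = ⊤ := by
      simp [ENNReal.tsum_const_eq_top_of_ne_zero (one_ne_zero)]
    rw [eq_top_iff]
    calc (⊤:ENNReal) = ∑' _ : ℕ, (1:ENNReal) := h5.symm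
      _ ≤ ∑' k, ∫⁻ x in Ioo (A k) (B k), ENNReal.ofReal |ftilde x * g x| := h4
      _ = _ := h2.symm
      _ ≤ _ := h1
  rw [hbig] at hfin
  exact lt_irrefl _ hfin
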